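/- arXiv:2205.00596 — 2 statements merged into one kernel-verified Lean document; each statement's English description precedes it below -/
import Mathlib

section
/- For all integers i, k_1, k_2 with 1 ≤ i ≤ k_1 < k_2 ≤ n, the following identity holds in W: τ_{k_1}^{−i}·τ_{k_2}^{i} = ∏_{j_1=k_1}^{k_2−1} ( s_{j_1}·s_{j_1−1}⋯s_{j_1−i+1} ), where the outer product is taken in increasing order of j_1 and each inner block is the product s_{j_1}·s_{j_1−1}⋯s_{j_1−i+1} of i consecutive generators in decreasing index order. In particular the right-hand side is an element of the subgroup generated by {s_1, …, s_{n−1}}. -/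
/-- The Coxeter matrix of type `Bₙ`, with the bond of order `4` between the
generators of indices `0` and `1` (the paper's convention): `s_i² = 1`,
`(s_0·s_1)⁴ = 1`, `(s_i·s_{i+1})³ = 1` for `1 ≤ i ≤ n-2`, and `(s_i·s_j)² = 1`
for `|i-j| ≥ 2`. -/
def BCoxeterMatrix (n : ℕ) : CoxeterMatrix (Fin n) where
  M := Matrix.of fun i j : Fin n ↦
    if i = j then 1
      else if ((i : ℕ) = 0 ∧ (j : ℕ) = 1) ∨ ((j : ℕ) = 0 ∧ (i : ℕ) = 1) then 4
      else if (j : ℕ) + 1 = i ∨ (i : ℕ) + 1 = j then 3 else 2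
  isSymm := by unfold Matrix.IsSymm; aesop
  diagonal := by simp
  off_diagonal := by aesop

variable {n : ℕ} {W : Type*} [Group W]

/-- The simple reflection `s_j` of the Coxeter system, for `0 ≤ j ≤ n-1`
(junk value `1` for `j ≥ n`). -/
def sgen (cs : CoxeterSystem (BCoxeterMatrix n) W) (j : ℕ) : W :=
  if h : j < n then cs.simple ⟨j, h⟩ else 1

/-- `tau cs k` is the element `τ_k = s_0 · s_1 ⋯ s_{k-1}` (with `τ_0 = 1`). -/
def tau (cs : CoxeterSystem (BCoxeterMatrix n) W) (k : ℕ) : W :=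
  ((List.range k).map (sgen cs)).prod

/-- The parabolic subgroup `Ṡ_n` of `W` generated by `s_1, …, s_{n-1}`. -/
def Sdot (cs : CoxeterSystem (BCoxeterMatrix n) W) : Subgroup W :=
  Subgroup.closure (cs.simple '' {j : Fin n | (j : ℕ) ≠ 0})

/-!
Since `τ_k⁻¹ = s_k τ_{k+1}⁻¹`, the element `τ_k^{-i} τ_{k+1}^i = (s_k τ_{k+1}⁻¹)^i τ_{k+1}^i` is the
product of the conjugates `τ_{k+1}^{-b} s_k τ_{k+1}^b` for `b < i`. Conjugation by `τ_K` lowers the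
index of `s_2, …, s_{K-1}` by one (a braid relation where the index meets the top of `τ_K`, plain
commutations elsewhere), so for `i ≤ k` these conjugates are `s_k, s_{k-1}, …, s_{k-i+1}`, all
different from `s_0`. The case of general `k_1 ≤ k_2` telescopes.
-/

namespace CoxeterSystem

variable {B : Type*} {M : CoxeterMatrix B} (cs : CoxeterSystem M W) {i i' : B}

theorem commute_simple_of_eq_two (h : M i i' = 2) : Commute (cs.simple i) (cs.simple i') := by
  show cs.simple i * cs.simple i' = cs.simple i' * cs.simple i
  simpa [braidWord, alternatingWord, wordProd, h, M.symmetric i' i ▸ h, mul_assoc] using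
    cs.wordProd_braidWord_eq i i'

theorem simple_braid_of_eq_three (h : M i i' = 3) :
    cs.simple i * cs.simple i' * cs.simple i = cs.simple i' * cs.simple i * cs.simple i' := by
  simpa [braidWord, alternatingWord, wordProd, h, M.symmetric i' i ▸ h, mul_assoc] using
    (cs.wordProd_braidWord_eq i i').symm

end CoxeterSystem

theorem mul_inv_pow_mul_pow {G : Type*} [Group G] (g t : G) (i : ℕ) :
    (g * t⁻¹) ^ i * t ^ i = ((List.range i).map fun b => t⁻¹ ^ b * g * t ^ b).prod := by
  induction i with
  | zero => simp
  | succ i ih =>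
    rw [List.range_succ, List.map_append, List.prod_append, ← ih, List.map_singleton,
      List.prod_singleton, pow_succ (g * t⁻¹), pow_succ' t, inv_pow]
    simp only [mul_assoc, inv_mul_cancel_left, mul_inv_cancel_left]

theorem BCoxeterMatrix_apply_of_add_two_le {j m : Fin n} (h : (j : ℕ) + 2 ≤ m) :
    BCoxeterMatrix n j m = 2 := by
  simp only [BCoxeterMatrix, Matrix.of_apply, Fin.ext_iff]
  rw [if_neg, if_neg, if_neg] <;> omega

theorem BCoxeterMatrix_apply_of_succ_eq {j m : Fin n} (hj : 1 ≤ (j : ℕ)) (h : (j : ℕ) + 1 = m) :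
    BCoxeterMatrix n j m = 3 := by
  simp only [BCoxeterMatrix, Matrix.of_apply, Fin.ext_iff]
  rw [if_neg, if_neg, if_pos] <;> omega

section TypeB

variable (cs : CoxeterSystem (BCoxeterMatrix n) W)

theorem sgen_commute {j m : ℕ} (h : j + 2 ≤ m) : Commute (sgen cs j) (sgen cs m) := by
  unfold sgen
  split_ifs with hj hm hm
  · exact cs.commute_simple_of_eq_two (BCoxeterMatrix_apply_of_add_two_le h)
  · exact Commute.one_right _
  · omega
  · exact Commute.one_left _

theorem sgen_braid {j : ℕ} (hj : 1 ≤ j) (hn : j + 1 < n) :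
    sgen cs j * sgen cs (j + 1) * sgen cs j = sgen cs (j + 1) * sgen cs j * sgen cs (j + 1) := by
  unfold sgen
  rw [dif_pos (by omega), dif_pos hn]
  exact cs.simple_braid_of_eq_three (BCoxeterMatrix_apply_of_succ_eq hj rfl)

theorem sgen_mem_Sdot {j : ℕ} (hj : 1 ≤ j) : sgen cs j ∈ Sdot cs := by
  unfold sgen
  split
  · exact Subgroup.subset_closure ⟨_, Nat.one_le_iff_ne_zero.mp hj, rfl⟩
  · exact one_mem _

theorem tau_succ (k : ℕ) : tau cs (k + 1) = tau cs k * sgen cs k := by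
  simp [tau, List.range_succ]

theorem tau_inv_eq_sgen_mul (k : ℕ) : (tau cs k)⁻¹ = sgen cs k * (tau cs (k + 1))⁻¹ := by
  rw [tau_succ, mul_inv_rev, mul_inv_cancel_left]

theorem commute_tau_sgen {k m : ℕ} (h : k + 1 ≤ m) : Commute (tau cs k) (sgen cs m) := by
  induction k with
  | zero => exact Commute.one_left _
  | succ k ih => rw [tau_succ]; exact (ih (by omega)).mul_left (sgen_commute cs (by omega))

theorem tau_mul_sgen {j K : ℕ} (hj : 1 ≤ j) (hK : j + 2 ≤ K) (hKn : K ≤ n) :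
    tau cs K * sgen cs j = sgen cs (j + 1) * tau cs K := by
  induction K, hK using Nat.le_induction with
  | base =>
    have hc : tau cs j * sgen cs (j + 1) = sgen cs (j + 1) * tau cs j :=
      (commute_tau_sgen cs le_rfl).eq
    calc tau cs (j + 2) * sgen cs j
        = tau cs j * (sgen cs j * sgen cs (j + 1) * sgen cs j) := by
          simp only [tau_succ, mul_assoc]
      _ = tau cs j * sgen cs (j + 1) * (sgen cs j * sgen cs (j + 1)) := by
          rw [sgen_braid cs hj (by omega)]; simp only [mul_assoc]
      _ = sgen cs (j + 1) * tau cs (j + 2) := by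
          rw [hc]; simp only [tau_succ, mul_assoc]
  | succ K hK ih =>
    calc tau cs (K + 1) * sgen cs j = tau cs K * sgen cs j * sgen cs K := by
          rw [tau_succ, mul_assoc, (sgen_commute cs hK).symm.eq, mul_assoc]
      _ = sgen cs (j + 1) * tau cs (K + 1) := by
          rw [ih (by omega), tau_succ, mul_assoc]

theorem tau_inv_pow_mul_sgen_mul_tau_pow {j b K : ℕ} (hj : 1 ≤ j) (hK : j + b + 1 ≤ K)
    (hKn : K ≤ n) : (tau cs K)⁻¹ ^ b * sgen cs (j + b) * tau cs K ^ b = sgen cs j := by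
  induction b with
  | zero => simp
  | succ b ih =>
    have hshift : (tau cs K)⁻¹ * sgen cs (j + b + 1) * tau cs K = sgen cs (j + b) := by
      rw [mul_assoc, ← tau_mul_sgen cs (by omega) (by omega) hKn, inv_mul_cancel_left]
    calc (tau cs K)⁻¹ ^ (b + 1) * sgen cs (j + (b + 1)) * tau cs K ^ (b + 1)
        = (tau cs K)⁻¹ ^ b * ((tau cs K)⁻¹ * sgen cs (j + b + 1) * tau cs K) * tau cs K ^ b := by
          rw [pow_succ (tau cs K)⁻¹, pow_succ' (tau cs K)]
          simp only [add_assoc, mul_assoc]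
      _ = sgen cs j := by rw [hshift, ih (by omega)]

theorem tau_pow_inv_mul_tau_succ_pow {i k : ℕ} (hik : i ≤ k) (hkn : k < n) :
    (tau cs k ^ i)⁻¹ * tau cs (k + 1) ^ i = ((List.range i).map fun b => sgen cs (k - b)).prod := by
  rw [← inv_pow, tau_inv_eq_sgen_mul, mul_inv_pow_mul_pow]
  refine congrArg List.prod (List.map_congr_left fun b hb => ?_)
  have hbi : b < i := List.mem_range.mp hb
  have := tau_inv_pow_mul_sgen_mul_tau_pow cs (j := k - b) (b := b) (by omega) (by omega) hkn
  rwa [Nat.sub_add_cancel (by omega)] at this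

theorem tau_pow_inv_mul_tau_pow {i k₁ k₂ : ℕ} (hik : i ≤ k₁) (hk : k₁ ≤ k₂) (hk₂ : k₂ ≤ n) :
    (tau cs k₁ ^ i)⁻¹ * tau cs k₂ ^ i =
      ((List.range (k₂ - k₁)).map fun a =>
        ((List.range i).map fun b => sgen cs (k₁ + a - b)).prod).prod := by
  obtain ⟨m, rfl⟩ := Nat.exists_eq_add_of_le hk
  have := List.prod_range_div' m fun a => (tau cs (k₁ + a) ^ i)⁻¹
  simp only [div_eq_mul_inv, inv_inv, add_zero] at this
  rw [Nat.add_sub_cancel_left, ← this]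
  refine congrArg List.prod (List.map_congr_left fun a ha => ?_)
  exact tau_pow_inv_mul_tau_succ_pow cs (by omega) (by simp at ha; omega)

end TypeB

theorem tau_zpow_neg_mul_tau_zpow_general (cs : CoxeterSystem (BCoxeterMatrix n) W)
    (i k₁ k₂ : ℕ) (hik : i ≤ k₁) (hk : k₁ < k₂) (hk₂ : k₂ ≤ n) :
    tau cs k₁ ^ (-(i : ℤ)) * tau cs k₂ ^ (i : ℤ) =
      ((List.range (k₂ - k₁)).map (fun a =>
        ((List.range i).map (fun b => sgen cs (k₁ + a - b))).prod)).prod ∧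
    tau cs k₁ ^ (-(i : ℤ)) * tau cs k₂ ^ (i : ℤ) ∈ Sdot cs := by
  have hprod : tau cs k₁ ^ (-(i : ℤ)) * tau cs k₂ ^ (i : ℤ) =
      ((List.range (k₂ - k₁)).map (fun a =>
        ((List.range i).map (fun b => sgen cs (k₁ + a - b))).prod)).prod := by
    rw [zpow_neg, zpow_natCast, zpow_natCast]
    exact tau_pow_inv_mul_tau_pow cs hik hk.le hk₂
  refine ⟨hprod, hprod ▸ (Sdot cs).list_prod_mem ?_⟩
  simp only [List.mem_map, List.mem_range]
  rintro _ ⟨a, -, rfl⟩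
  refine (Sdot cs).list_prod_mem ?_
  simp only [List.mem_map, List.mem_range]
  rintro _ ⟨b, hb, rfl⟩
  exact sgen_mem_Sdot cs (by omega)

/-- `τ_{k_1}^{-i} · τ_{k_2}^{i} = ∏_{j_1=k_1}^{k_2-1} (s_{j_1} · s_{j_1-1} ⋯ s_{j_1-i+1})`
for `1 ≤ i ≤ k_1 < k_2 ≤ n`; in particular this element lies in the subgroup
generated by `s_1, …, s_{n-1}`. -/
theorem tau_zpow_neg_mul_tau_zpow (cs : CoxeterSystem (BCoxeterMatrix n) W)
    (i k₁ k₂ : ℕ) (hi : 1 ≤ i) (hik : i ≤ k₁) (hk : k₁ < k₂) (hk₂ : k₂ ≤ n) :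
    tau cs k₁ ^ (-(i : ℤ)) * tau cs k₂ ^ (i : ℤ) =
      ((List.range (k₂ - k₁)).map (fun a =>
        ((List.range i).map (fun b => sgen cs (k₁ + a - b))).prod)).prod ∧
    tau cs k₁ ^ (-(i : ℤ)) * tau cs k₂ ^ (i : ℤ) ∈ Sdot cs :=
  tau_zpow_neg_mul_tau_zpow_general cs i k₁ k₂ hik hk hk₂
end

section
/- For every 1 ≤ k ≤ n, the Coxeter length of τ_k^{−k} in W equals k²; that is, ℓ(τ_k^{−k}) = Σ_{i=0}^{k−1} (2i+1) = k². -/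
variable {n : ℕ} {W : Type*} [Group W]

namespace BnAux

open Equiv

/-- Images of the generators in `Perm ℕ` (positions `0,…,2n-1`; position `n-1-t`
plays the role of `-(t+1)` and position `n+t` plays the role of `t+1`). -/
def sig (n i : ℕ) : Equiv.Perm ℕ :=
  if i = 0 then Equiv.swap (n-1) n
  else Equiv.swap (n+i-1) (n+i) * Equiv.swap (n-i-1) (n-i)

lemma swap_disjoint {a b c d : ℕ} (h1 : a ≠ c) (h2 : a ≠ d) (h3 : b ≠ c) (h4 : b ≠ d) :
    Equiv.Perm.Disjoint (swap a b) (swap c d) := by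
  intro x
  by_cases hx : x = a ∨ x = b
  · right; rcases hx with rfl | rfl <;> exact swap_apply_of_ne_of_ne (by omega) (by omega)
  · left; push_neg at hx; exact swap_apply_of_ne_of_ne hx.1 hx.2

lemma braid3 {a b c : ℕ} (h1 : a ≠ b) (h2 : b ≠ c) (h3 : a ≠ c) :
    (swap a b * swap b c) ^ 3 = 1 := by
  have huvu : swap a b * swap b c * swap a b = swap a c := by
    rw [show Equiv.swap a b = Equiv.swap b a from swap_comm a b,
      show Equiv.swap b c = Equiv.swap c b from swap_comm b c]
    exact swap_mul_swap_mul_swap (Ne.symm h2) (fun h => h3 h.symm)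
  have hvuv : swap b c * swap a b * swap b c = swap c a :=
    swap_mul_swap_mul_swap h1 h3
  calc (swap a b * swap b c) ^ 3
      = (swap a b * swap b c * swap a b) * (swap b c * swap a b * swap b c) := by
        simp only [pow_succ, pow_zero, one_mul, mul_assoc]
    _ = swap a c * swap c a := by rw [huvu, hvuv]
    _ = 1 := by rw [swap_comm c a, swap_mul_self]

lemma sq_one_of {G : Type*} [Group G] {x y : G} (hx : x * x = 1) (hy : y * y = 1)
    (h : Commute x y) : (x * y) ^ 2 = 1 := by
  rw [sq, h.symm.mul_mul_mul_comm, hx, hy, one_mul]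

lemma order4 {a b c d : ℕ} (hab : a ≠ b) (hac : a ≠ c) (had : a ≠ d) (hbc : b ≠ c)
    (hbd : b ≠ d) (hcd : c ≠ d) :
    (swap b c * (swap c d * swap a b)) ^ 4 = 1 := by
  have hsq : (swap b c * (swap c d * swap a b)) * (swap b c * (swap c d * swap a b))
      = swap a d * swap b c := by
    ext x
    rcases eq_or_ne x a with rfl | hxa
    · simp [Equiv.Perm.mul_apply, swap_apply_left, swap_apply_right,
        swap_apply_of_ne_of_ne, hab, hac, had, hbc, hbd, hcd,
        hab.symm, hac.symm, had.symm, hbc.symm, hbd.symm, hcd.symm]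
    rcases eq_or_ne x b with rfl | hxb
    · simp [Equiv.Perm.mul_apply, swap_apply_left, swap_apply_right,
        swap_apply_of_ne_of_ne, hab, hac, had, hbc, hbd, hcd,
        hab.symm, hac.symm, had.symm, hbc.symm, hbd.symm, hcd.symm]
    rcases eq_or_ne x c with rfl | hxc
    · simp [Equiv.Perm.mul_apply, swap_apply_left, swap_apply_right,
        swap_apply_of_ne_of_ne, hab, hac, had, hbc, hbd, hcd,
        hab.symm, hac.symm, had.symm, hbc.symm, hbd.symm, hcd.symm]
    rcases eq_or_ne x d with rfl | hxd
    · simp [Equiv.Perm.mul_apply, swap_apply_left, swap_apply_right,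
        swap_apply_of_ne_of_ne, hab, hac, had, hbc, hbd, hcd,
        hab.symm, hac.symm, had.symm, hbc.symm, hbd.symm, hcd.symm]
    · simp [Equiv.Perm.mul_apply, swap_apply_of_ne_of_ne, hxa, hxb, hxc, hxd]
  have h1 : (swap a d * swap b c) * (swap a d * swap b c) = 1 := by
    have := sq_one_of (swap_mul_self a d) (swap_mul_self b c)
      (swap_disjoint hab hac (Ne.symm hbd) (Ne.symm hcd)).commute
    rwa [sq] at this
  calc (swap b c * (swap c d * swap a b)) ^ 4
      = ((swap b c * (swap c d * swap a b)) * (swap b c * (swap c d * swap a b)))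
        * ((swap b c * (swap c d * swap a b)) * (swap b c * (swap c d * swap a b))) := by
        simp only [pow_succ, pow_zero, one_mul, mul_assoc]
    _ = 1 := by rw [hsq]; exact h1

lemma pow_rev {G : Type*} [Group G] {x y : G} {m : ℕ} (h : (x * y) ^ m = 1) :
    (y * x) ^ m = 1 := by
  have : (y * x) ^ m = y * (x * y) ^ m * y⁻¹ := by
    rw [← conj_pow]; group
  rw [this, h, mul_one, mul_inv_cancel]

/-- `sig n i` is an involution. -/
lemma sig_mul_self {n : ℕ} (i : ℕ) (hn : 1 ≤ n) (hi : i < n) : sig n i * sig n i = 1 := by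
  unfold sig
  rcases Nat.eq_zero_or_pos i with rfl | hi1
  · simp
  · rw [if_neg (by omega)]
    exact sq_one_of (swap_mul_self _ _) (swap_mul_self _ _)
      (swap_disjoint (by omega) (by omega) (by omega) (by omega)).commute

/-- Far-apart generators commute (as a disjointness statement). -/
lemma sig_disjoint {n i j : ℕ} (hij : i + 2 ≤ j) (hj : j < n) :
    Equiv.Perm.Disjoint (sig n i) (sig n j) := by
  unfold sig
  rcases Nat.eq_zero_or_pos i with rfl | hi1
  · rw [if_pos rfl, if_neg (by omega)]
    exact ((swap_disjoint (by omega) (by omega) (by omega) (by omega)).mul_right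
      (swap_disjoint (by omega) (by omega) (by omega) (by omega)))
  · rw [if_neg (by omega), if_neg (by omega)]
    exact (((swap_disjoint (by omega) (by omega) (by omega) (by omega)).mul_right
      (swap_disjoint (by omega) (by omega) (by omega) (by omega))).mul_left
      ((swap_disjoint (by omega) (by omega) (by omega) (by omega)).mul_right
      (swap_disjoint (by omega) (by omega) (by omega) (by omega))))

lemma sig_comm_pow {n i j : ℕ} (hij : i + 2 ≤ j) (hj : j < n) :
    (sig n i * sig n j) ^ 2 = 1 :=
  sq_one_of (sig_mul_self i (by omega) (by omega)) (sig_mul_self j (by omega) hj)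
    (sig_disjoint hij hj).commute

lemma sig_braid {n i : ℕ} (hi : 1 ≤ i) (hij : i + 1 < n) :
    (sig n i * sig n (i+1)) ^ 3 = 1 := by
  unfold sig
  rw [if_neg (by omega), if_neg (by omega),
    show n + (i+1) - 1 = n + i from by omega, show n + (i+1) = n + i + 1 from by omega,
    show n - (i+1) - 1 = n - i - 2 from by omega, show n - (i+1) = n - i - 1 from by omega]
  have hregroup : swap (n+i-1) (n+i) * swap (n-i-1) (n-i) *
      (swap (n+i) (n+i+1) * swap (n-i-2) (n-i-1))
      = (swap (n+i-1) (n+i) * swap (n+i) (n+i+1)) *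
        (swap (n-i-1) (n-i) * swap (n-i-2) (n-i-1)) :=
    Commute.mul_mul_mul_comm
      (swap_disjoint (by omega) (by omega) (by omega) (by omega)).commute _ _
  rw [hregroup]
  have hcom : Commute (swap (n+i-1) (n+i) * swap (n+i) (n+i+1))
      (swap (n-i-1) (n-i) * swap (n-i-2) (n-i-1)) :=
    (((swap_disjoint (show n+i-1 ≠ n-i-1 by omega) (by omega) (by omega) (by omega)).mul_right
      (swap_disjoint (by omega) (by omega) (by omega) (by omega))).mul_left
      ((swap_disjoint (by omega) (by omega) (by omega) (by omega)).mul_right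
      (swap_disjoint (by omega) (by omega) (by omega) (by omega)))).commute
  rw [hcom.mul_pow]
  have hA : (swap (n+i-1) (n+i) * swap (n+i) (n+i+1)) ^ 3 = 1 :=
    braid3 (by omega) (by omega) (by omega)
  have hB : (swap (n-i-1) (n-i) * swap (n-i-2) (n-i-1)) ^ 3 = 1 := by
    rw [swap_comm (n-i-1) (n-i), swap_comm (n-i-2) (n-i-1)]
    exact braid3 (by omega) (by omega) (by omega)
  rw [hA, hB, one_mul]

/-- The order-4 relation between `sig n 0` and `sig n 1`. -/
lemma sig_order4 {n : ℕ} (hn : 2 ≤ n) : (sig n 0 * sig n 1) ^ 4 = 1 := by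
  unfold sig
  rw [if_pos rfl, if_neg (by omega), show n + 1 - 1 = n from by omega,
    show n - 1 - 1 = n - 2 from by omega]
  exact order4 (a := n-2) (b := n-1) (c := n) (d := n+1)
    (by omega) (by omega) (by omega) (by omega) (by omega) (by omega)

lemma isLiftable (n : ℕ) : (BCoxeterMatrix n).IsLiftable (fun i : Fin n => sig n i.1) := by
  intro i j
  have hM : (BCoxeterMatrix n) i j =
      (if i = j then 1
        else if ((i : ℕ) = 0 ∧ (j : ℕ) = 1) ∨ ((j : ℕ) = 0 ∧ (i : ℕ) = 1) then 4
        else if (j : ℕ) + 1 = i ∨ (i : ℕ) + 1 = j then 3 else 2) := rfl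
  simp only []
  rcases eq_or_ne i j with rfl | hij
  · rw [hM, if_pos rfl, pow_one]
    exact sig_mul_self i.1 (by have := i.2; omega) i.2
  · rw [hM, if_neg hij]
    have hij' : (i : ℕ) ≠ (j : ℕ) := fun h => hij (Fin.ext h)
    by_cases h01 : ((i : ℕ) = 0 ∧ (j : ℕ) = 1) ∨ ((j : ℕ) = 0 ∧ (i : ℕ) = 1)
    · rw [if_pos h01]
      rcases h01 with ⟨h1, h2⟩ | ⟨h1, h2⟩
      · rw [h1, h2]
        exact sig_order4 (by have := j.2; omega)
      · rw [h1, h2]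
        exact pow_rev (sig_order4 (by have := i.2; omega))
    · rw [if_neg h01]
      push_neg at h01
      by_cases hadj : (j : ℕ) + 1 = i ∨ (i : ℕ) + 1 = j
      · rw [if_pos hadj]
        rcases hadj with h | h
        · rw [← h]
          have hj1 : 1 ≤ (j : ℕ) := by
            rcases Nat.eq_zero_or_pos (j : ℕ) with h0 | h1
            · exfalso; exact (h01.2 h0) (by omega)
            · exact h1
          exact pow_rev (sig_braid hj1 (by have := i.2; omega))
        · rw [← h]
          have hi1 : 1 ≤ (i : ℕ) := by
            rcases Nat.eq_zero_or_pos (i : ℕ) with h0 | h1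
            · exfalso; exact (h01.1 h0) (by omega)
            · exact h1
          exact sig_braid hi1 (by have := j.2; omega)
      · rw [if_neg hadj]
        push_neg at hadj
        rcases le_or_gt (i : ℕ) (j : ℕ) with hle | hlt
        · exact sig_comm_pow (by omega) j.2
        · exact pow_rev (sig_comm_pow (by omega) i.2)

/-- Number of inversions of `π` among positions `0, …, 2n-1`. -/
def invct (n : ℕ) (π : Equiv.Perm ℕ) : ℕ :=
  ((Finset.range (2*n) ×ˢ Finset.range (2*n)).filter
    fun p => p.1 < p.2 ∧ π p.2 < π p.1).card

/-- Number of positions in `[n, 2n)` sent by `π` into `[0, n)`. -/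
def negct (n : ℕ) (π : Equiv.Perm ℕ) : ℕ :=
  ((Finset.range (2*n)).filter fun j => n ≤ j ∧ π j < n).card

lemma invct_one (n : ℕ) : invct n 1 = 0 := by
  unfold invct
  rw [Finset.card_eq_zero, Finset.filter_eq_empty_iff]
  intro p _
  simp only [Equiv.Perm.one_apply]
  omega

lemma negct_one (n : ℕ) : negct n 1 = 0 := by
  unfold negct
  rw [Finset.card_eq_zero, Finset.filter_eq_empty_iff]
  intro p _
  simp only [Equiv.Perm.one_apply]
  omega

lemma invct_mul_swap_le (n : ℕ) (π : Equiv.Perm ℕ) (p q : ℕ) (hq : q = p + 1)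
    (hp : q < 2*n) : invct n (π * swap p q) ≤ invct n π + 1 := by
  classical
  subst hq
  set s := swap p (p+1) with hs
  set S' := ((Finset.range (2*n) ×ˢ Finset.range (2*n)).filter
    fun x => x.1 < x.2 ∧ (π * s) x.2 < (π * s) x.1) with hS'
  have h1 : S' ⊆ insert (p, p+1) (S'.erase (p, p+1)) :=
    Finset.subset_insert_iff.mpr (le_refl _)
  have h2 : (S'.erase (p, p+1)).card ≤ invct n π := by
    apply Finset.card_le_card_of_injOn (fun x => (s x.1, s x.2))
    · intro x hx
      rw [Finset.mem_coe, Finset.mem_erase] at hx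
      obtain ⟨hne, hx⟩ := hx
      rw [hS', Finset.mem_filter, Finset.mem_product, Finset.mem_range,
        Finset.mem_range] at hx
      obtain ⟨⟨hx1, hx2⟩, hlt, hval⟩ := hx
      have hne' : ¬(x.1 = p ∧ x.2 = p + 1) := by
        intro ⟨ha, hb⟩
        exact hne (Prod.ext ha hb)
      rw [Finset.mem_coe, Finset.mem_filter, Finset.mem_product, Finset.mem_range, Finset.mem_range]
      refine ⟨⟨?_, ?_⟩, ?_, ?_⟩
      · show s x.1 < 2*n
        rw [hs, swap_apply_def]; split_ifs <;> omega
      · show s x.2 < 2*n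
        rw [hs, swap_apply_def]; split_ifs <;> omega
      · show s x.1 < s x.2
        rw [hs, swap_apply_def, swap_apply_def]; split_ifs <;> omega
      · simpa [Equiv.Perm.mul_apply] using hval
    · intro x _ y _ hxy
      simp only [Prod.mk.injEq] at hxy
      exact Prod.ext (s.injective hxy.1) (s.injective hxy.2)
  calc S'.card ≤ (insert (p, p+1) (S'.erase (p, p+1))).card := Finset.card_le_card h1
    _ ≤ (S'.erase (p, p+1)).card + 1 := Finset.card_insert_le _ _
    _ ≤ invct n π + 1 := by omega

lemma negct_mul_sig0_le (n : ℕ) (π : Equiv.Perm ℕ) (hn : 1 ≤ n) :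
    negct n (π * sig n 0) ≤ negct n π + 1 := by
  classical
  unfold negct
  have hsub : ((Finset.range (2*n)).filter fun j => n ≤ j ∧ (π * sig n 0) j < n)
      ⊆ insert n ((Finset.range (2*n)).filter fun j => n ≤ j ∧ π j < n) := by
    intro j hj
    rw [Finset.mem_filter, Finset.mem_range] at hj
    obtain ⟨hj2n, hjn, hval⟩ := hj
    rcases eq_or_ne j n with rfl | hne
    · exact Finset.mem_insert_self _ _
    · apply Finset.mem_insert_of_mem
      rw [Finset.mem_filter, Finset.mem_range]
      have : (sig n 0) j = j := by
        unfold sig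
        rw [if_pos rfl]
        exact swap_apply_of_ne_of_ne (by omega) hne
      refine ⟨hj2n, hjn, ?_⟩
      rw [Equiv.Perm.mul_apply, this] at hval
      exact hval
  calc _ ≤ (insert n ((Finset.range (2*n)).filter fun j => n ≤ j ∧ π j < n)).card :=
        Finset.card_le_card hsub
    _ ≤ _ + 1 := Finset.card_insert_le _ _

lemma negct_mul_sig_le (n : ℕ) (π : Equiv.Perm ℕ) (i : ℕ) (hi1 : 1 ≤ i) (hi : i < n) :
    negct n (π * sig n i) ≤ negct n π := by
  classical
  unfold negct
  apply Finset.card_le_card_of_injOn (fun j => (sig n i) j)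
  · intro j hj
    rw [Finset.mem_coe, Finset.mem_filter, Finset.mem_range] at hj
    obtain ⟨hj2n, hjn, hval⟩ := hj
    have hb : n ≤ (sig n i) j ∧ (sig n i) j < 2*n := by
      unfold sig
      rw [if_neg (by omega)]
      simp only [Equiv.Perm.mul_apply, swap_apply_def]
      split_ifs <;> omega
    rw [Finset.mem_coe, Finset.mem_filter, Finset.mem_range]
    refine ⟨hb.2, hb.1, ?_⟩
    rw [Equiv.Perm.mul_apply] at hval
    exact hval
  · intro x _ y _ hxy
    exact (sig n i).injective hxy

lemma stat_mul_sig_le (n : ℕ) (π : Equiv.Perm ℕ) (i : ℕ) (hi : i < n) :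
    invct n (π * sig n i) + negct n (π * sig n i) ≤ invct n π + negct n π + 2 := by
  have hn : 1 ≤ n := by omega
  rcases Nat.eq_zero_or_pos i with rfl | hi1
  · have h1 : invct n (π * sig n 0) ≤ invct n π + 1 := by
      have : sig n 0 = swap (n-1) n := by unfold sig; rw [if_pos rfl]
      rw [this]
      exact invct_mul_swap_le n π (n-1) n (by omega) (by omega)
    have h2 := negct_mul_sig0_le n π hn
    omega
  · have hsig : sig n i = swap (n+i-1) (n+i) * swap (n-i-1) (n-i) := by
      unfold sig; rw [if_neg (by omega)]
    have h1 : invct n (π * sig n i) ≤ invct n π + 2 := by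
      rw [hsig, ← mul_assoc]
      calc invct n (π * swap (n+i-1) (n+i) * swap (n-i-1) (n-i))
          ≤ invct n (π * swap (n+i-1) (n+i)) + 1 :=
            invct_mul_swap_le n _ (n-i-1) (n-i) (by omega) (by omega)
        _ ≤ invct n π + 1 + 1 := by
            have := invct_mul_swap_le n π (n+i-1) (n+i) (by omega) (by omega)
            omega
        _ = invct n π + 2 := by omega
    have h2 := negct_mul_sig_le n π i hi1 hi
    omega

/-- The image of `τ_k` in `Perm ℕ`. -/
def cperm (n k : ℕ) : Equiv.Perm ℕ := ((List.range k).map (sig n)).prod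

/-- Explicit formula for `cperm`. -/
def FF (n k x : ℕ) : ℕ :=
  if n ≤ x ∧ x < n+k-1 then x+1
  else if x = n+k-1 then n-1
  else if n-k+1 ≤ x ∧ x ≤ n-1 then x-1
  else if x = n-k then n
  else x

lemma cperm_succ (n k : ℕ) : cperm n (k+1) = cperm n k * sig n k := by
  unfold cperm
  rw [List.range_succ, List.map_append, List.prod_append]
  simp

set_option maxHeartbeats 2000000 in
lemma cperm_apply (n k : ℕ) (hk : 1 ≤ k) (hkn : k ≤ n) :
    ∀ x, cperm n k x = FF n k x := by
  induction k with
  | zero => omega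
  | succ k IH =>
    intro x
    rcases Nat.eq_zero_or_pos k with rfl | hk1
    · have h1 : cperm n 1 = sig n 0 := by
        unfold cperm
        rw [List.range_succ, List.range_zero]
        simp
      rw [h1]
      unfold sig FF
      rw [if_pos rfl, swap_apply_def]
      split_ifs <;> omega
    · have hIH := IH hk1 (by omega)
      rw [cperm_succ, Equiv.Perm.mul_apply]
      have hs : (sig n k) x = (if x = n+k-1 then n+k else if x = n+k then n+k-1
          else if x = n-k-1 then n-k else if x = n-k then n-k-1 else x) := by
        unfold sig
        rw [if_neg (by omega)]
        simp only [Equiv.Perm.mul_apply, swap_apply_def]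
        split_ifs <;> omega
      rw [hs]
      split_ifs <;> (rw [hIH]; unfold FF; split_ifs <;> omega)

/-- The image of `τ_k^k` in `Perm ℕ`: position-reversal on the window. -/
def rho (n k : ℕ) : Equiv.Perm ℕ :=
  ((List.range k).map (fun j => Equiv.swap (n-1-j) (n+j))).prod

def RR (n k x : ℕ) : ℕ := if n-k ≤ x ∧ x < n+k then 2*n-1-x else x

lemma rho_apply (n k : ℕ) (hkn : k ≤ n) : ∀ x, rho n k x = RR n k x := by
  induction k with
  | zero =>
    intro x
    unfold rho RR
    simp only [List.range_zero, List.map_nil, List.prod_nil, Equiv.Perm.one_apply]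
    rw [if_neg (by omega)]
  | succ k IH =>
    intro x
    have hstep : rho n (k+1) = rho n k * Equiv.swap (n-1-k) (n+k) := by
      unfold rho
      rw [List.range_succ, List.map_append, List.prod_append]
      simp
    rw [hstep, Equiv.Perm.mul_apply, swap_apply_def]
    split_ifs <;> (rw [IH (by omega)]; unfold RR; split_ifs <;> omega)

/-- Orbit parametrization. -/
def EE (n k m : ℕ) : ℕ := if m < k then n + m else n - 1 - (m - k)

lemma cperm_cycle {n k : ℕ} (hk : 1 ≤ k) (hkn : k ≤ n) (m : ℕ) (hm : m < 2*k) :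
    cperm n k (EE n k m) = EE n k ((m+1) % (2*k)) := by
  rw [cperm_apply n k hk hkn]
  rcases eq_or_ne (m+1) (2*k) with he | hne
  · rw [he, Nat.mod_self]
    unfold EE FF
    split_ifs <;> omega
  · rw [Nat.mod_eq_of_lt (by omega)]
    unfold EE FF
    split_ifs <;> omega

lemma cperm_pow {n k : ℕ} (hk : 1 ≤ k) (hkn : k ≤ n) (j : ℕ) :
    ∀ m, m < 2*k → (cperm n k ^ j) (EE n k m) = EE n k ((m+j) % (2*k)) := by
  induction j with
  | zero =>
    intro m hm
    simp [Nat.mod_eq_of_lt hm]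
  | succ j IH =>
    intro m hm
    rw [pow_succ, Equiv.Perm.mul_apply, cperm_cycle hk hkn m hm,
      IH _ (Nat.mod_lt _ (by omega)), Nat.mod_add_mod,
      show m + 1 + j = m + (j+1) from by omega]

lemma cperm_pow_k {n k : ℕ} (hk : 1 ≤ k) (hkn : k ≤ n) :
    cperm n k ^ k = rho n k := by
  ext x
  by_cases hx : n-k ≤ x ∧ x < n+k
  · rcases le_or_gt n x with hge | hlt
    · have hmlt : x - n < 2*k := by omega
      have hEE : EE n k (x-n) = x := by
        unfold EE
        rw [if_pos (by omega)]
        omega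
      rw [← hEE, cperm_pow hk hkn k _ hmlt, rho_apply n k hkn]
      rw [Nat.mod_eq_of_lt (by omega)]
      unfold EE RR
      split_ifs <;> omega
    · have hmlt : (n-1-x) + k < 2*k := by omega
      have hEE : EE n k ((n-1-x)+k) = x := by
        unfold EE
        rw [if_neg (by omega)]
        omega
      rw [← hEE, cperm_pow hk hkn k _ hmlt, rho_apply n k hkn]
      have harg : (n-1-x) + k + k - 2*k = n-1-x := by omega
      rw [Nat.mod_eq_sub_mod (by omega), harg, Nat.mod_eq_of_lt (by omega)]
      unfold EE RR
      split_ifs <;> omega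
  · have hx' : x < n - k ∨ n + k ≤ x := by
      rcases not_and_or.mp hx with h | h <;> omega
    have hfix : cperm n k x = x := by
      rw [cperm_apply n k hk hkn]
      unfold FF
      split_ifs <;> omega
    have hpow : ∀ j, (cperm n k ^ j) x = x := by
      intro j
      induction j with
      | zero => simp
      | succ j IHj => rw [pow_succ, Equiv.Perm.mul_apply, hfix, IHj]
    rw [hpow k, rho_apply n k hkn]
    unfold RR
    rw [if_neg (by omega)]

lemma rho_mul_self {n k : ℕ} (hkn : k ≤ n) : rho n k * rho n k = 1 := by
  ext x
  rw [Equiv.Perm.mul_apply, rho_apply n k hkn, rho_apply n k hkn, Equiv.Perm.one_apply]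
  unfold RR
  split_ifs <;> omega

lemma negct_rho {n k : ℕ} (hk : 1 ≤ k) (hkn : k ≤ n) : k ≤ negct n (rho n k) := by
  have hsub : Finset.Ico n (n+k) ⊆
      ((Finset.range (2*n)).filter fun j => n ≤ j ∧ (rho n k) j < n) := by
    intro j hj
    rw [Finset.mem_Ico] at hj
    rw [Finset.mem_filter, Finset.mem_range, rho_apply n k hkn]
    unfold RR
    rw [if_pos (by omega)]
    omega
  have := Finset.card_le_card hsub
  rwa [Nat.card_Ico, Nat.add_sub_cancel_left] at this

lemma invct_rho {n k : ℕ} (hk : 1 ≤ k) (hkn : k ≤ n) :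
    k * (2*k-1) ≤ invct n (rho n k) := by
  classical
  set T := (Finset.range (2*k)).biUnion
    (fun b => (Finset.range b).image (fun a => (n-k+a, n-k+b))) with hT
  have hdisj : ∀ b₁ ∈ Finset.range (2*k), ∀ b₂ ∈ Finset.range (2*k), b₁ ≠ b₂ →
      Disjoint ((Finset.range b₁).image (fun a => (n-k+a, n-k+b₁)))
        ((Finset.range b₂).image (fun a => (n-k+a, n-k+b₂))) := by
    intro b₁ _ b₂ _ hne
    rw [Finset.disjoint_left]
    intro p hp1 hp2
    rw [Finset.mem_image] at hp1 hp2
    obtain ⟨a₁, _, rfl⟩ := hp1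
    obtain ⟨a₂, _, h2⟩ := hp2
    have := congrArg Prod.snd h2
    simp only at this
    exact hne (by omega)
  have hcard : T.card = k * (2*k-1) := by
    rw [hT, Finset.card_biUnion hdisj]
    have : ∀ b ∈ Finset.range (2*k),
        ((Finset.range b).image (fun a => (n-k+a, n-k+b))).card = b := by
      intro b _
      rw [Finset.card_image_of_injOn, Finset.card_range]
      intro a₁ _ a₂ _ h
      have := congrArg Prod.fst h
      simp only at this
      omega
    rw [Finset.sum_congr rfl this]
    have h2 := Finset.sum_range_id_mul_two (2*k)
    rw [mul_assoc] at h2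
    omega
  have hsub : T ⊆ ((Finset.range (2*n) ×ˢ Finset.range (2*n)).filter
      fun p => p.1 < p.2 ∧ (rho n k) p.2 < (rho n k) p.1) := by
    intro p hp
    rw [hT, Finset.mem_biUnion] at hp
    obtain ⟨b, hb, hp⟩ := hp
    rw [Finset.mem_image] at hp
    obtain ⟨a, ha, rfl⟩ := hp
    rw [Finset.mem_range] at hb ha
    rw [Finset.mem_filter, Finset.mem_product, Finset.mem_range, Finset.mem_range,
      rho_apply n k hkn, rho_apply n k hkn]
    unfold RR
    rw [if_pos (by omega), if_pos (by omega)]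
    refine ⟨⟨by omega, by omega⟩, by omega, by omega⟩
  calc k * (2*k-1) = T.card := hcard.symm
    _ ≤ _ := Finset.card_le_card hsub

end BnAux


namespace BnAux

variable {n : ℕ} {W : Type*} [Group W]

/-- The homomorphism `W →* Perm ℕ` realizing the signed-permutation model. -/
noncomputable def phi (cs : CoxeterSystem (BCoxeterMatrix n) W) : W →* Equiv.Perm ℕ :=
  cs.lift ⟨fun i => sig n i.1, isLiftable n⟩

lemma phi_simple (cs : CoxeterSystem (BCoxeterMatrix n) W) (i : Fin n) :
    phi cs (cs.simple i) = sig n i.1 :=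
  cs.lift_apply_simple (isLiftable n) i

lemma stat_word (cs : CoxeterSystem (BCoxeterMatrix n) W) (ω : List (Fin n)) :
    invct n (phi cs (cs.wordProd ω)) + negct n (phi cs (cs.wordProd ω)) ≤ 2 * ω.length := by
  induction ω using List.reverseRecOn with
  | nil =>
    rw [CoxeterSystem.wordProd_nil, map_one, invct_one, negct_one]
    omega
  | append_singleton ω i IH =>
    rw [CoxeterSystem.wordProd_append, CoxeterSystem.wordProd_singleton, map_mul, phi_simple]
    have hb := stat_mul_sig_le n (phi cs (cs.wordProd ω)) i.1 i.2
    rw [List.length_append, List.length_singleton]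
    omega

lemma length_lower (cs : CoxeterSystem (BCoxeterMatrix n) W) (w : W) :
    invct n (phi cs w) + negct n (phi cs w) ≤ 2 * cs.length w := by
  obtain ⟨ω, hlen, rfl⟩ := cs.exists_reduced_word w
  rw [show cs.length (cs.wordProd ω) = ω.length from hlen]
  exact stat_word cs ω

lemma phi_tau (cs : CoxeterSystem (BCoxeterMatrix n) W) {k : ℕ} (hkn : k ≤ n) :
    phi cs (tau cs k) = cperm n k := by
  unfold tau cperm
  rw [map_list_prod, List.map_map]
  congr 1
  apply List.map_congr_left
  intro j hj
  rw [List.mem_range] at hj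
  have hjn : j < n := by omega
  show phi cs (sgen cs j) = sig n j
  unfold sgen
  rw [dif_pos hjn, phi_simple]

lemma length_list_prod_le (cs : CoxeterSystem (BCoxeterMatrix n) W) (l : List W) :
    cs.length l.prod ≤ (l.map cs.length).sum := by
  induction l with
  | nil => simp
  | cons x l IH =>
    rw [List.prod_cons, List.map_cons, List.sum_cons]
    calc cs.length (x * l.prod) ≤ cs.length x + cs.length l.prod := cs.length_mul_le _ _
      _ ≤ _ := by omega

lemma length_tau_le (cs : CoxeterSystem (BCoxeterMatrix n) W) (k : ℕ) :
    cs.length (tau cs k) ≤ k := by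
  unfold tau
  calc cs.length ((List.range k).map (sgen cs)).prod
      ≤ (((List.range k).map (sgen cs)).map cs.length).sum := length_list_prod_le cs _
    _ ≤ (((List.range k).map (sgen cs)).map cs.length).length * 1 := by
        apply List.sum_le_card_nsmul
        intro x hx
        rw [List.mem_map] at hx
        obtain ⟨w, hw, rfl⟩ := hx
        rw [List.mem_map] at hw
        obtain ⟨j, _, rfl⟩ := hw
        unfold sgen
        split_ifs
        · rw [cs.length_simple]
        · rw [cs.length_one]; omega
    _ = k := by simp

lemma length_pow_le (cs : CoxeterSystem (BCoxeterMatrix n) W) (w : W) (m : ℕ) :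
    cs.length (w ^ m) ≤ m * cs.length w := by
  induction m with
  | zero => simp
  | succ m IH =>
    rw [pow_succ]
    calc cs.length (w ^ m * w) ≤ cs.length (w ^ m) + cs.length w := cs.length_mul_le _ _
      _ ≤ m * cs.length w + cs.length w := by omega
      _ = (m + 1) * cs.length w := by ring

end BnAux

/-- `ℓ(τ_k^{-k}) = k²` for every `1 ≤ k ≤ n`. -/
theorem length_tau_pow_neg (cs : CoxeterSystem (BCoxeterMatrix n) W)
    (k : ℕ) (hk : 1 ≤ k) (hkn : k ≤ n) :
    cs.length (tau cs k ^ (-(k : ℤ))) = k ^ 2 := by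
  open BnAux in
  have hzpow : tau cs k ^ (-(k : ℤ)) = ((tau cs k) ^ k)⁻¹ := by
    rw [zpow_neg, zpow_natCast]
  rw [hzpow, cs.length_inv]
  -- upper bound
  have hupper : cs.length ((tau cs k) ^ k) ≤ k ^ 2 := by
    calc cs.length ((tau cs k) ^ k) ≤ k * cs.length (tau cs k) := length_pow_le cs _ k
      _ ≤ k * k := Nat.mul_le_mul_left k (length_tau_le cs k)
      _ = k ^ 2 := (sq k).symm
  -- lower bound
  have hphi : phi cs ((tau cs k) ^ k) = rho n k := by
    rw [map_pow, phi_tau cs hkn, cperm_pow_k hk hkn]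
  have hlow := length_lower cs ((tau cs k) ^ k)
  rw [hphi] at hlow
  have hinv := invct_rho (n := n) hk hkn
  have hneg := negct_rho (n := n) hk hkn
  obtain ⟨m, rfl⟩ : ∃ m, k = m + 1 := ⟨k - 1, by omega⟩
  have hq : (m+1) * (2*(m+1)-1) + (m+1) = 2 * ((m+1)^2) := by
    rw [show 2*(m+1)-1 = 2*m+1 from by omega]
    ring
  have hsq : (m+1)^2 = (m+1)*(m+1) := sq (m+1)
  omega
end
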